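/- Let s ≥ 0, 0 < δ < 1/2, M ≥ 1, and θ := (1/2)(1/2 − δ). For real numbers ξ, ξ₁, ξ₂ with ξ = ξ₁ + ξ₂, 1 < ξ < ξ₁, ξ₂ < 0, and M < |2ξξ₂| ≤ ξ₁², set |Ω| = 2ξ|ξ₂| > M; then ⟨ξ⟩^{s+δ}/(|ξ₁| |Ω|) ≤ C M^{(δ − 1/2 + θ)/2 − 1} ⟨ξ₁⟩^{s − 1/2 − θ} for an absolute constant C. -/

import Mathlib

/-- Multiplier bound for the boundary term of the first normal form reduction:
with `θ = (1/2)(1/2 − δ)` and `|Ω| = |2ξξ₂| ∈ (M, ξ₁²]` on the region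
`ξ = ξ₁ + ξ₂`, `1 < ξ < ξ₁`, `ξ₂ < 0`, one has
`⟨ξ⟩^{s+δ}/(|ξ₁||Ω|) ≤ C·M^{(δ−1/2+θ)/2 − 1}·⟨ξ₁⟩^{s−1/2−θ}` for an absolute constant `C`. -/
theorem boundary_multiplier_bound :
    ∃ C > 0, ∀ s δ M θ ξ ξ₁ ξ₂ : ℝ,
      0 ≤ s → 0 < δ → δ < 1/2 → 1 ≤ M → θ = (1/2) * (1/2 - δ) →
      ξ = ξ₁ + ξ₂ → 1 < ξ → ξ < ξ₁ → ξ₂ < 0 →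
      M < |2 * ξ * ξ₂| → |2 * ξ * ξ₂| ≤ ξ₁^2 →
      (1 + |ξ|) ^ (s + δ) / (|ξ₁| * |2 * ξ * ξ₂|)
        ≤ C * M ^ ((δ - 1/2 + θ)/2 - 1) * (1 + |ξ₁|) ^ (s - 1/2 - θ) := by
  refine ⟨2, by norm_num, ?_⟩
  intro s δ M θ ξ ξ₁ ξ₂ hs hδ hδ2 hM hθ hsum hξ hξξ₁ hξ₂ hMΩ hΩ
  subst hθ
  set Ω := |2 * ξ * ξ₂| with hΩdef
  have hξ0 : (0:ℝ) < ξ := lt_trans one_pos hξ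
  have hξ₁1 : (1:ℝ) < ξ₁ := lt_trans hξ hξξ₁
  have hξ₁0 : (0:ℝ) < ξ₁ := lt_trans one_pos hξ₁1
  have hM0 : (0:ℝ) < M := lt_of_lt_of_le one_pos hM
  have hΩpos : 0 < Ω := lt_trans hM0 hMΩ
  have hA : (0:ℝ) < 1 + ξ₁ := by linarith
  set θ := (1/2 : ℝ) * (1/2 - δ) with hθdef
  have hθpos : 0 < θ := by rw [hθdef]; linarith
  rw [abs_of_pos hξ0, abs_of_pos hξ₁0]
  have hkey : (1+ξ₁) ^ (-θ) ≤ Ω ^ (-(θ/2)) := by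
    rw [Real.rpow_neg hA.le, Real.rpow_neg hΩpos.le]
    apply inv_anti₀ (Real.rpow_pos_of_pos hΩpos _)
    calc Ω ^ (θ/2) ≤ (ξ₁^2) ^ (θ/2) :=
          Real.rpow_le_rpow hΩpos.le hΩ (by linarith)
      _ = ξ₁ ^ θ := by
          rw [← Real.rpow_natCast ξ₁ 2, ← Real.rpow_mul hξ₁0.le]
          norm_num
          congr 1
          ring
      _ ≤ (1+ξ₁) ^ θ := Real.rpow_le_rpow hξ₁0.le (by linarith) hθpos.le
  have hΩM : Ω ^ (-(θ/2+1)) ≤ M ^ (-(θ/2+1)) := by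
    rw [Real.rpow_neg hΩpos.le, Real.rpow_neg hM0.le]
    exact inv_anti₀ (Real.rpow_pos_of_pos hM0 _)
      (Real.rpow_le_rpow hM0.le hMΩ.le (by linarith))
  have hE : (δ - 1/2 + θ)/2 - 1 = -(θ/2+1) := by rw [hθdef]; ring
  have hsplit : (1+ξ₁) ^ (s+δ) = (1+ξ₁) ^ (s-1/2-θ) * (1+ξ₁) ^ (-θ) * (1+ξ₁) := by
    rw [← Real.rpow_add hA, ← Real.rpow_add_one hA.ne']
    congr 1
    rw [hθdef]; ring
  calc (1 + ξ) ^ (s + δ) / (ξ₁ * Ω)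
      ≤ (1 + ξ₁) ^ (s + δ) / (ξ₁ * Ω) := by
        apply div_le_div_of_nonneg_right ?_ (by positivity)
        · exact Real.rpow_le_rpow (by linarith) (by linarith) (by linarith)
    _ ≤ (1 + ξ₁) ^ (s + δ) / ((1+ξ₁)/2 * Ω) := by
        apply div_le_div_of_nonneg_left (by positivity) (by positivity)
        nlinarith
    _ = 2 * ((1+ξ₁) ^ (s-1/2-θ) * ((1+ξ₁) ^ (-θ) * Ω⁻¹)) := by
        rw [hsplit]; field_simp
    _ ≤ 2 * ((1+ξ₁) ^ (s-1/2-θ) * (Ω ^ (-(θ/2)) * Ω ^ (-(1:ℝ)))) := by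
        rw [Real.rpow_neg_one]
        have := mul_le_mul_of_nonneg_right hkey (inv_nonneg.2 hΩpos.le)
        nlinarith [Real.rpow_nonneg hA.le (s-1/2-θ), this,
          Real.rpow_nonneg hA.le (s-1/2-θ)]
    _ = 2 * ((1+ξ₁) ^ (s-1/2-θ) * Ω ^ (-(θ/2+1))) := by
        rw [← Real.rpow_add hΩpos]; ring_nf
    _ ≤ 2 * M ^ ((δ - 1/2 + θ)/2 - 1) * (1 + ξ₁) ^ (s - 1/2 - θ) := by
        rw [hE]
        have h := mul_le_mul_of_nonneg_left hΩM (Real.rpow_nonneg hA.le (s-1/2-θ))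
        nlinarith [h]
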